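/- Let I ⊆ {1, …, m}. Then for every L ⊆ {1, …, m}: v_{I∪Ī} · w_L = (Π_{i∈I} ε(i)) w_L if I ⊆ L, and v_{I∪Ī} · w_L = 0 otherwise. Equivalently, the action of v_{I∪Ī} on V_Spin is the endomorphism (Π_{i∈I} ε(i)) Σ_L w^*_L ⊗ w_L, the sum being over all subsets L of {1, …, m} containing I. -/

import Mathlib

/-!
Formalization of a statement from "A Landau-Ginzburg model for Lagrangian
Grassmannians, Langlands duality, and relations in quantum cohomology"
(arXiv:1304.4958).

Conventions: `V = ℂ^(2m+1)` with 0-based coordinates (`a : Fin (2m+1)`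
corresponds to the paper's 1-based basis index `i = a+1`);
`ε(i) = (−1)^(m+1−i)`, written as `(−1)^(m+1+i)` which has the same parity.
-/

noncomputable section
open scoped BigOperators

def eps (m i : ℕ) : ℂ := (-1 : ℂ) ^ (m + 1 + i)

/-- The spin representation `V_Spin = ⋀•W`, modelled by coordinates with respect to its
basis `{w_I}` indexed by the subsets `I ⊆ {1,…,m}` (encoded as `Finset (Fin m)`:
the element `a : Fin m` stands for the paper index `a+1`, i.e. the basis vector
`v_{a+1}` of `W`). -/
abbrev VS (m : ℕ) := Finset (Fin m) → ℂ

/-- The basis vector `w_I` of `V_Spin`. -/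
def wB {m : ℕ} (I : Finset (Fin m)) : VS m := fun L => if L = I then 1 else 0

/-- The action of `v_{a+1}` (for `a : Fin m`) on `V_Spin`, i.e. wedging with `v_{a+1}`:
`v_{a+1} ⋅ w_L = (−1)^{#{l ∈ L : l < a}} w_{L ∪ {a}}` if `a ∉ L`, and `0` otherwise. -/
def crtF (m : ℕ) (a : Fin m) : Module.End ℂ (VS m) :=
  Matrix.mulVecLin (Matrix.of fun L' L : Finset (Fin m) =>
    if a ∈ L' ∧ L = L'.erase a then (-1 : ℂ) ^ ((L'.filter (· < a)).card) else 0)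

/-- The action of `v̄_{a+1}` (for `a : Fin m`) on `V_Spin`: the interior product
(insertion operator) contracting with the linear form `2Φ(v̄_{a+1}, −)` on `W`. -/
def annF (m : ℕ) (a : Fin m) : Module.End ℂ (VS m) :=
  Matrix.mulVecLin (Matrix.of fun L' L : Finset (Fin m) =>
    if a ∈ L ∧ L' = L.erase a then
      (-1 : ℂ) ^ ((L.filter (· < a)).card) * eps m ((a : ℕ) + 1) else 0)

/-- The action of `v_{m+1}` on `V_Spin`: multiplication by `(−1)^k/√2` on `⋀^k W`. -/
def midF (m : ℕ) : Module.End ℂ (VS m) :=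
  Matrix.mulVecLin (Matrix.of fun L' L : Finset (Fin m) =>
    if L' = L then (-1 : ℂ) ^ (L.card) * (((Real.sqrt 2 : ℝ) : ℂ))⁻¹ else 0)

/-- The action on `V_Spin` of the Clifford generator `v_i`, for a paper index
`i ∈ {1,…,2m+1}`: wedging for `i ≤ m`, the scalar `(−1)^k/√2` for `i = m+1`, and
the insertion operator for `v̄_{2m+2−i}` when `i ≥ m+2`. -/
def genOpF (m : ℕ) (i : ℕ) : Module.End ℂ (VS m) :=
  if h : 1 ≤ i ∧ i ≤ m then crtF m ⟨i - 1, by omega⟩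
  else if i = m + 1 then midF m
  else if h2 : m + 2 ≤ i ∧ i ≤ 2 * m + 1 then annF m ⟨2 * m + 1 - i, by omega⟩
  else 0

/-- The action on `V_Spin` of the ordered product `v_K = v_{k_1} v_{k_2} ⋯ v_{k_r}` of
Clifford generators, for a set of paper indices `K = {k_1 < ⋯ < k_r} ⊆ {1,…,2m+1}`. -/
def prodOpF (m : ℕ) (K : Finset ℕ) : Module.End ℂ (VS m) :=
  ((K.sort (· ≤ ·)).map (genOpF m)).prod

/-- The subset of `Fin m` corresponding to a set `I ⊆ {1,…,m}` of paper basis indices of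
`W` (paper index `i` corresponds to `a : Fin m` with `a + 1 = i`). -/
def IdxF (m : ℕ) (I : Finset ℕ) : Finset (Fin m) :=
  Finset.univ.filter (fun a => (a : ℕ) + 1 ∈ I)

lemma mulVecLin_wB {m : ℕ} (M : Matrix (Finset (Fin m)) (Finset (Fin m)) ℂ)
    (L₀ : Finset (Fin m)) :
    M.mulVecLin (wB L₀) = fun L' => M L' L₀ := by
  funext L'
  simp [Matrix.mulVecLin, Matrix.mulVec, dotProduct, wB, mul_ite,
    Finset.sum_ite_eq']

lemma crtF_wB {m : ℕ} (a : Fin m) (L₀ : Finset (Fin m)) :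
    crtF m a (wB L₀) =
      if a ∈ L₀ then 0
      else ((-1 : ℂ) ^ (((insert a L₀).filter (· < a)).card)) • wB (insert a L₀) := by
  rw [crtF, mulVecLin_wB]
  by_cases h : a ∈ L₀
  · rw [if_pos h]
    funext L'
    simp only [Matrix.of_apply, Pi.zero_apply]
    rw [if_neg]
    rintro ⟨h1, h2⟩
    exact (Finset.notMem_erase a L') (h2 ▸ h)
  · rw [if_neg h]
    funext L'
    simp only [Matrix.of_apply, Pi.smul_apply, wB, smul_eq_mul]
    by_cases hL : L' = insert a L₀
    · subst hL
      rw [if_pos ⟨Finset.mem_insert_self a L₀, (Finset.erase_insert h).symm⟩, if_pos rfl,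
        mul_one]
    · rw [if_neg, if_neg hL, mul_zero]
      rintro ⟨h1, h2⟩
      exact hL (by rw [h2, Finset.insert_erase h1])

lemma annF_wB {m : ℕ} (a : Fin m) (L₀ : Finset (Fin m)) :
    annF m a (wB L₀) =
      if a ∈ L₀ then
        ((-1 : ℂ) ^ ((L₀.filter (· < a)).card) * eps m ((a : ℕ) + 1)) • wB (L₀.erase a)
      else 0 := by
  rw [annF, mulVecLin_wB]
  by_cases h : a ∈ L₀
  · rw [if_pos h]
    funext L'
    simp only [Matrix.of_apply, Pi.smul_apply, wB, smul_eq_mul]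
    by_cases hL : L' = L₀.erase a
    · rw [if_pos ⟨h, hL⟩, if_pos hL, mul_one]
    · rw [if_neg (fun hh => hL hh.2), if_neg hL, mul_zero]
  · rw [if_neg h]
    funext L'
    simp only [Matrix.of_apply, Pi.zero_apply]
    rw [if_neg (fun hh => h hh.1)]

lemma sort_decomp (i j : ℕ) (K' : Finset ℕ) (hij : i < j)
    (h1 : ∀ x ∈ K', i < x) (h2 : ∀ x ∈ K', x < j) :
    (insert i (insert j K')).sort (· ≤ ·) = i :: (K'.sort (· ≤ ·) ++ [j]) := by
  have hjs : j ∉ K'.sort (· ≤ ·) := fun hx =>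
    absurd (h2 j ((Finset.mem_sort _).mp hx)) (lt_irrefl j)
  have his : i ∉ K'.sort (· ≤ ·) := fun hx =>
    absurd (h1 i ((Finset.mem_sort _).mp hx)) (lt_irrefl i)
  have hnd : (i :: (K'.sort (· ≤ ·) ++ [j])).Nodup := by
    refine List.nodup_cons.mpr ⟨?_, (Finset.sort_nodup _ _).append (List.nodup_singleton j)
      (fun x hx hx' => ?_)⟩
    · rw [List.mem_append, List.mem_singleton]
      rintro (hx | rfl)
      · exact his hx
      · omega
    · rw [List.mem_singleton] at hx'
      subst hx'
      exact hjs hx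
  have hsorted : List.Pairwise (· ≤ ·) (i :: (K'.sort (· ≤ ·) ++ [j])) := by
    rw [List.pairwise_cons]
    constructor
    · intro b hb
      rcases List.mem_append.mp hb with hb | hb
      · exact le_of_lt (h1 b (Finset.mem_sort (α := ℕ) (· ≤ ·) |>.mp hb))
      · rw [List.mem_singleton.mp hb]; omega
    · rw [List.pairwise_append]
      refine ⟨Finset.pairwise_sort _ _, List.pairwise_singleton _ j, fun a ha b hb => ?_⟩
      rw [List.mem_singleton.mp hb]
      exact le_of_lt (h2 a (Finset.mem_sort (α := ℕ) (· ≤ ·) |>.mp ha))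
  have hfin : (i :: (K'.sort (· ≤ ·) ++ [j])).toFinset = insert i (insert j K') := by
    ext x
    simp only [List.toFinset_cons, List.toFinset_append, Finset.sort_toFinset,
      List.toFinset_cons, List.toFinset_nil, Finset.mem_insert, Finset.mem_union,
      LawfulSingleton.insert_empty_eq, Finset.mem_singleton]
    tauto
  rw [← hfin, List.toFinset_sort _ hnd]
  exact hsorted

lemma prodOpF_decomp (m i j : ℕ) (K' : Finset ℕ) (hij : i < j)
    (h1 : ∀ x ∈ K', i < x) (h2 : ∀ x ∈ K', x < j) :
    prodOpF m (insert i (insert j K')) = genOpF m i * prodOpF m K' * genOpF m j := by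
  unfold prodOpF
  rw [sort_decomp i j K' hij h1 h2]
  simp [List.prod_append, mul_assoc]

lemma key (m : ℕ) (hm : 2 ≤ m) :
    ∀ (I : Finset ℕ), I ⊆ Finset.Icc 1 m → ∀ L : Finset (Fin m),
    prodOpF m (I ∪ I.image (fun i => 2 * m + 2 - i)) (wB L)
      = if IdxF m I ⊆ L then (∏ i ∈ I, eps m i) • wB L else 0 := by
  intro I
  induction I using Finset.strongInduction with
  | _ I ih =>
    intro hI L
    rcases I.eq_empty_or_nonempty with rfl | hne
    · have h0 : IdxF m (∅ : Finset ℕ) = ∅ := by simp [IdxF]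
      simp [prodOpF, h0]
    · have hne' := hne
      set i := I.min' hne with hi_def
      have hiI : i ∈ I := I.min'_mem hne
      have hi1 : 1 ≤ i ∧ i ≤ m := by
        have := hI hiI
        rwa [Finset.mem_Icc] at this
      set a : Fin m := ⟨i - 1, by omega⟩ with ha_def
      have hav : (a : ℕ) + 1 = i := by
        simp only [ha_def]
        omega
      set I' := I.erase i with hI'_def
      have hI'sub : I' ⊆ Finset.Icc 1 m := (Finset.erase_subset _ _).trans hI
      have hss : I' ⊂ I := Finset.erase_ssubset hiI
      have hbound : ∀ x ∈ I' ∪ I'.image (fun i => 2 * m + 2 - i),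
          i < x ∧ x < 2 * m + 2 - i := by
        intro x hx
        rcases Finset.mem_union.mp hx with hx | hx
        · obtain ⟨hxne, hxI⟩ := Finset.mem_erase.mp hx
          have hb := hI hxI
          rw [Finset.mem_Icc] at hb
          have hle : i ≤ x := Finset.min'_le I x hxI
          omega
        · obtain ⟨y, hy, rfl⟩ := Finset.mem_image.mp hx
          obtain ⟨hyne, hyI⟩ := Finset.mem_erase.mp hy
          have hb := hI hyI
          rw [Finset.mem_Icc] at hb
          have hle : i ≤ y := Finset.min'_le I y hyI
          omega
      have hK : I ∪ I.image (fun i => 2 * m + 2 - i)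
          = insert i (insert (2 * m + 2 - i) (I' ∪ I'.image (fun i => 2 * m + 2 - i))) := by
        conv_lhs => rw [← Finset.insert_erase hiI]
        rw [Finset.image_insert, Finset.insert_union, Finset.union_insert]
      have hgi : genOpF m i = crtF m a := by
        rw [genOpF, dif_pos hi1]
      have hgj : genOpF m (2 * m + 2 - i) = annF m a := by
        rw [genOpF, dif_neg (by omega), if_neg (by omega), dif_pos (by omega)]
        congr 1
        exact Fin.ext (by simp only [ha_def]; omega)
      rw [hK, prodOpF_decomp m i (2 * m + 2 - i) _ (by omega)
        (fun x hx => (hbound x hx).1) (fun x hx => (hbound x hx).2),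
        hgi, hgj, Module.End.mul_apply, Module.End.mul_apply, annF_wB]
      have haIdx : a ∈ IdxF m I := by
        simp only [IdxF, Finset.mem_filter, Finset.mem_univ, true_and, hav]
        exact hiI
      by_cases haL : a ∈ L
      · rw [if_pos haL, map_smul, map_smul]
        have hIdx : IdxF m I' = (IdxF m I).erase a := by
          ext b
          simp only [IdxF, hI'_def, Finset.mem_filter, Finset.mem_univ, true_and,
            Finset.mem_erase, Fin.ext_iff, ha_def]
          constructor
          · rintro ⟨h1, h2⟩
            exact ⟨by omega, h2⟩
          · rintro ⟨h1, h2⟩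
            exact ⟨by omega, h2⟩
        have hcond : (IdxF m I' ⊆ L.erase a) ↔ (IdxF m I ⊆ L) := by
          rw [hIdx]
          constructor
          · intro h x hx
            by_cases hx' : x = a
            · subst hx'; exact haL
            · exact Finset.mem_of_mem_erase (h (Finset.mem_erase.mpr ⟨hx', hx⟩))
          · intro h
            exact Finset.erase_subset_erase a h
        rw [ih I' hss hI'sub (L.erase a)]
        by_cases hsub : IdxF m I ⊆ L
        · rw [if_pos (hcond.mpr hsub), if_pos hsub, map_smul, crtF_wB,
            if_neg (Finset.notMem_erase a L), Finset.insert_erase haL,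
            smul_smul, smul_smul]
          congr 1
          rw [← Finset.mul_prod_erase I (fun x => eps m x) hiI, hav]
          have hsq : ((-1 : ℂ) ^ ((L.filter (· < a)).card)) *
              ((-1 : ℂ) ^ ((L.filter (· < a)).card)) = 1 := by
            rw [← pow_add]
            exact Even.neg_one_pow ⟨(L.filter (· < a)).card, rfl⟩
          linear_combination (eps m i * ∏ x ∈ I.erase i, eps m x) * hsq
        · rw [if_neg ((not_iff_not.mpr hcond).mpr hsub), if_neg hsub, map_zero, smul_zero]
      · rw [if_neg haL, map_zero, map_zero, if_neg (fun h => haL (h haIdx))]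

/-- Let `I ⊆ {1,…,m}`. Then for every `L ⊆ {1,…,m}`:
`v_{I∪Ī} · w_L = (Π_{i∈I} ε(i)) w_L` if `I ⊆ L`, and `v_{I∪Ī} · w_L = 0` otherwise
(here `Ī = {2m+2−i : i ∈ I}`, and `v_K` is the product of the Clifford generators
indexed by `K` in increasing order). -/
theorem vII_action (m : ℕ) (hm : 2 ≤ m) (I : Finset ℕ) (hI : I ⊆ Finset.Icc 1 m)
    (L : Finset (Fin m)) :
    prodOpF m (I ∪ I.image (fun i => 2 * m + 2 - i)) (wB L)
      = if IdxF m I ⊆ L then (∏ i ∈ I, eps m i) • wB L else 0 :=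
  key m hm I hI L

end
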